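/- A graph G has two disjoint maximum independent sets if and only if there exists a matching M of size α(G) such that the subgraph of G induced by the vertices covered by M is bipartite. -/

import Mathlib

/-
If `S₁, S₂` are disjoint maximum independent sets, Hall's condition holds from `S₁` to `S₂`
along the edges of `G`: for `T ⊆ S₁` with neighbourhood `N` in `S₂`, the set `(S₂ \ N) ∪ T` is
independent, so `|T| ≤ |N|` by maximality of `|S₂|`. A matching of `S₁` into `S₂` has `α(G)`
edges, and its vertex set `S₁ ∪ S₂` is bipartite. Conversely, if the vertex set of a matching
with `α(G)` edges splits into independent sets `A, B`, then `|A| + |B| = 2α(G)` while both are at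
most `α(G)`, so both are maximum.
-/

open SimpleGraph

variable {V : Type*} [Fintype V] [DecidableEq V]

/-- A set of vertices is independent: no two of its vertices are adjacent. -/
def isIndep (G : SimpleGraph V) (S : Finset V) : Prop :=
  ∀ ⦃a⦄, a ∈ S → ∀ ⦃b⦄, b ∈ S → ¬ G.Adj a b

/-- The independence number `α(G)`. -/
noncomputable def indepNum (G : SimpleGraph V) : ℕ :=
  sSup {n | ∃ S : Finset V, isIndep G S ∧ S.card = n}

/-- A maximum independent set: an independent set of size `α(G)`. -/
def isMaxIndep (G : SimpleGraph V) (S : Finset V) : Prop :=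
  isIndep G S ∧ S.card = _root_.indepNum G

/-- `G` has two disjoint maximum independent sets. -/
def hasTwoDisjointMaxIndep (G : SimpleGraph V) : Prop :=
  ∃ S₁ S₂ : Finset V, isMaxIndep G S₁ ∧ isMaxIndep G S₂ ∧ Disjoint S₁ S₂

/-- A matching: a set of edges of `G`, pairwise sharing no vertex. -/
def isMatchingF (G : SimpleGraph V) (M : Finset (Sym2 V)) : Prop :=
  (∀ e ∈ M, e ∈ G.edgeSet) ∧
  (∀ e ∈ M, ∀ f ∈ M, e ≠ f → ∀ v : V, v ∈ e → v ∉ f)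

/-- The matching number `μ(G)`. -/
noncomputable def matchNum (G : SimpleGraph V) : ℕ :=
  sSup {n | ∃ M : Finset (Sym2 V), isMatchingF G M ∧ M.card = n}

/-- A shedding vertex: for every independent set `S` of `G − N[v]` there is a
neighbor `u` of `v` with `S ∪ {u}` independent. -/
def IsShedding (G : SimpleGraph V) (v : V) : Prop :=
  ∀ S : Finset V, isIndep G S → (∀ w ∈ S, w ≠ v ∧ ¬ G.Adj v w) →
    ∃ u, G.Adj v u ∧ isIndep G (insert u S)

/-- A perfect matching of `G`: a matching covering every vertex. -/
def hasPerfectMatchingF (G : SimpleGraph V) : Prop :=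
  ∃ M : Finset (Sym2 V), isMatchingF G M ∧ ∀ v : V, ∃ e ∈ M, v ∈ e

/-- The disjoint union of `k` copies of `K₂`. -/
def copiesK2 (k : ℕ) : SimpleGraph (Fin k × Fin 2) :=
  SimpleGraph.fromRel (fun p q => p.1 = q.1)

open Finset Function

section
variable {V : Type*} {G : SimpleGraph V}

lemma card_le_indepNum [Fintype V] {S : Finset V} (hS : isIndep G S) :
    #S ≤ _root_.indepNum G :=
  le_csSup ⟨Fintype.card V, by rintro n ⟨T, -, rfl⟩; exact T.card_le_univ⟩ ⟨S, hS, rfl⟩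

lemma isIndep.mono {S T : Finset V} (hT : isIndep G T) (hST : S ⊆ T) : isIndep G S :=
  fun _ ha _ hb => hT (hST ha) (hST hb)

lemma card_le_card_filter_adj [Fintype V] [DecidableEq V] [DecidableRel G.Adj] {T S : Finset V}
    (hT : isIndep G T) (hS : isMaxIndep G S) (hTS : Disjoint T S) :
    #T ≤ #{y ∈ S | ∃ x ∈ T, G.Adj x y} := by
  set N := {y ∈ S | ∃ x ∈ T, G.Adj x y}
  have hNS : N ⊆ S := filter_subset _ _
  have hU : isIndep G ((S \ N) ∪ T) := by
    have hnotN : ∀ ⦃y⦄, y ∈ S \ N → ∀ ⦃x⦄, x ∈ T → ¬ G.Adj x y := fun y hy x hx hxy =>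
      (mem_sdiff.1 hy).2 (mem_filter.2 ⟨(mem_sdiff.1 hy).1, x, hx, hxy⟩)
    intro a ha b hb
    rcases mem_union.1 ha with ha | ha <;> rcases mem_union.1 hb with hb | hb
    · exact hS.1 (mem_sdiff.1 ha).1 (mem_sdiff.1 hb).1
    · exact fun h => hnotN ha hb h.symm
    · exact hnotN hb ha
    · exact hT ha hb
  have hcard : #(S \ N) + #T ≤ #S := by
    rw [← card_union_of_disjoint (hTS.symm.mono_left sdiff_subset), hS.2]
    exact card_le_indepNum hU
  have := card_sdiff_of_subset hNS
  have := card_le_card hNS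
  omega

lemma exists_injective_adj_of_isMaxIndep [Fintype V] [DecidableEq V] {S₁ S₂ : Finset V}
    (h₁ : isIndep G S₁) (h₂ : isMaxIndep G S₂) (hS : Disjoint S₁ S₂) :
    ∃ f : S₁ → V, Injective f ∧ ∀ x, f x ∈ S₂ ∧ G.Adj x (f x) := by
  classical
  refine (Fintype.all_card_le_filter_rel_iff_exists_injective
    fun (x : S₁) y => y ∈ S₂ ∧ G.Adj x y).1 fun A => ?_
  set T := A.map (Embedding.subtype _)
  have hTS₁ : T ⊆ S₁ := by
    intro x hx
    obtain ⟨a, -, rfl⟩ := mem_map.1 hx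
    exact a.2
  calc #A = #T := (card_map _).symm
    _ ≤ #{y ∈ S₂ | ∃ x ∈ T, G.Adj x y} :=
      card_le_card_filter_adj (h₁.mono hTS₁) h₂ (hS.mono_left hTS₁)
    _ ≤ #{y | ∃ a ∈ A, y ∈ S₂ ∧ G.Adj a y} := card_le_card fun y hy => by
        obtain ⟨hy, x, hx, hxy⟩ := mem_filter.1 hy
        obtain ⟨a, ha, rfl⟩ := mem_map.1 hx
        exact mem_filter.2 ⟨mem_univ _, a, ha, hy, hxy⟩
end

section
variable {V : Type*} [DecidableEq V] {G : SimpleGraph V}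

def pairEdges (S : Finset V) (f : S → V) : Finset (Sym2 V) :=
  S.attach.image fun x : S => s(↑x, f x)

variable {S : Finset V} {f : S → V}

lemma mem_pairEdges {e : Sym2 V} : e ∈ pairEdges S f ↔ ∃ x : S, s(↑x, f x) = e := by
  simp [pairEdges]

lemma card_pairEdges (hS : ∀ x, f x ∉ S) : #(pairEdges S f) = #S := by
  refine (card_image_of_injective _ fun x y hxy => ?_).trans card_attach
  rcases Sym2.eq_iff.1 hxy with ⟨h, -⟩ | ⟨h, -⟩
  · exact Subtype.ext h
  · exact absurd (h ▸ x.2) (hS y)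

lemma isMatchingF_pairEdges (hf : Injective f) (hS : ∀ x, f x ∉ S)
    (hadj : ∀ x : S, G.Adj x (f x)) : isMatchingF G (pairEdges S f) := by
  refine ⟨fun e he => ?_, fun e he e' he' hne v hv hv' => ?_⟩
  · obtain ⟨x, rfl⟩ := mem_pairEdges.1 he
    exact hadj x
  obtain ⟨x, rfl⟩ := mem_pairEdges.1 he
  obtain ⟨y, rfl⟩ := mem_pairEdges.1 he'
  have hxy : x ≠ y := fun h => hne (h ▸ rfl)
  rcases Sym2.mem_iff.1 hv with rfl | rfl <;> rcases Sym2.mem_iff.1 hv' with h | h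
  · exact hxy (Subtype.ext h)
  · exact hS y (h ▸ x.2)
  · exact hS x (h ▸ y.2)
  · exact hxy (hf h)

lemma exists_mem_pairEdges_iff {v : V} :
    (∃ e ∈ pairEdges S f, v ∈ e) ↔ v ∈ S ∪ S.attach.image f := by
  simp only [pairEdges, mem_image, mem_attach, true_and, exists_exists_eq_and, Sym2.mem_iff,
    mem_union]
  constructor
  · rintro ⟨x, rfl | rfl⟩
    exacts [Or.inl x.2, Or.inr ⟨x, rfl⟩]
  · rintro (hv | ⟨x, rfl⟩)
    exacts [⟨⟨v, hv⟩, Or.inl rfl⟩, ⟨x, Or.inr rfl⟩]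

lemma card_biUnion_toFinset_of_isMatchingF {M : Finset (Sym2 V)} (hM : isMatchingF G M) :
    #(M.biUnion Sym2.toFinset) = 2 * #M := by
  rw [card_biUnion, sum_congr rfl fun e he =>
    Sym2.card_toFinset_of_not_isDiag e (G.not_isDiag_of_mem_edgeSet (hM.1 e he)), sum_const,
    smul_eq_mul, mul_comm]
  exact fun e he e' he' hne => disjoint_left.2 fun v hv hv' =>
    hM.2 e he e' he' hne v (Sym2.mem_toFinset.1 hv) (Sym2.mem_toFinset.1 hv')

end

/-- `G` has two disjoint maximum independent sets iff there is a matching `M` of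
size `α(G)` such that the subgraph induced by `V(M)` is bipartite. -/
theorem stmt3 (G : SimpleGraph V) :
    hasTwoDisjointMaxIndep G ↔
      ∃ M : Finset (Sym2 V), isMatchingF G M ∧ M.card = _root_.indepNum G ∧
        ∃ A B : Finset V, Disjoint A B ∧ isIndep G A ∧ isIndep G B ∧
          ∀ v : V, (v ∈ A ∪ B ↔ ∃ e ∈ M, v ∈ e) := by
  constructor
  · rintro ⟨S₁, S₂, h₁, h₂, hS⟩
    obtain ⟨f, hf, hfS₂⟩ := exists_injective_adj_of_isMaxIndep h₁.1 h₂ hS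
    have hfS₁ : ∀ x, f x ∉ S₁ := fun x hx => disjoint_left.1 hS hx (hfS₂ x).1
    refine ⟨pairEdges S₁ f, isMatchingF_pairEdges hf hfS₁ fun x => (hfS₂ x).2,
      (card_pairEdges hfS₁).trans h₁.2, S₁, S₁.attach.image f, ?_, h₁.1, h₂.1.mono ?_,
      fun v => exists_mem_pairEdges_iff.symm⟩
    · exact disjoint_left.2 fun v hv hv' => by
        obtain ⟨x, -, rfl⟩ := mem_image.1 hv'
        exact hfS₁ x hv
    · intro v hv
      obtain ⟨x, -, rfl⟩ := mem_image.1 hv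
      exact (hfS₂ x).1
  · rintro ⟨M, hM, hMcard, A, B, hAB, hA, hB, hcov⟩
    have hcover : A ∪ B = M.biUnion Sym2.toFinset := by
      ext v
      simp [hcov]
    have hsum : #A + #B = 2 * _root_.indepNum G := by
      rw [← card_union_of_disjoint hAB, hcover, card_biUnion_toFinset_of_isMatchingF hM, hMcard]
    have := card_le_indepNum hA
    have := card_le_indepNum hB
    exact ⟨A, B, ⟨hA, by omega⟩, ⟨hB, by omega⟩, hAB⟩
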